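/- Let F₂(p₁,p₂) = σ₁Ω(p₁) + σ₂Ω(p₂) + σ₁₂Ω(p₁+p₂) on ℝ⁶, with σ₁,σ₂,σ₁₂ ∈ {±1} and Ω the Bogoliubov dispersion with D²Ω = I + λA, ‖A‖_∞ ≤ CM². Let T be the 6×6 block matrix ((σ₁+σ₁₂)I, σ₁₂I; σ₁₂I, (σ₂+σ₁₂)I). Then: (i) ∇F₂(0,0) = 0; (ii) det(T) = σ₁₂(σ₁₂σ₁σ₂+σ₁+σ₂)³ ≠ 0; (iii) for all λ > 0 small enough (depending on M), and for all k₂, p₂ ∈ ℝ⁶, |D²F₂(k₂)·p₂| ∈ [|T p₂|/2, 3|T p₂|/2]. -/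

import Mathlib

/-!
The Hessian of `F₂` is `T` plus `λ` times a bounded block operator built from `A`. Since the
`2 × 2` sign matrix behind `T` has determinant `±1` or `±3`, Cramer's rule bounds `|p|` by
`3 |T p|`, so the perturbation moves each block of `T p` by at most `|T p| / 4` once
`λ ‖A‖ ≤ 1/36`; the reverse triangle inequality for the `ℓ²` norm on `E × E` then gives the
two-sided bound. At the origin the gradient `(1 + λε)p` of `Ω` vanishes, and so does that of `F₂`.
-/

open InnerProductSpace Matrix Kronecker

theorem Fin.divNat_two_mul {n : ℕ} (k : Fin (2 * n)) :
    k.divNat = if (k : ℕ) < n then 0 else 1 := by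
  ext
  split_ifs with h
  · simp [Fin.coe_divNat, Nat.div_eq_of_lt h]
  · simp only [Fin.coe_divNat, Fin.isValue, Fin.val_one]
    exact Nat.div_eq_of_lt_le (by simpa using not_lt.mp h) (by simpa [two_mul] using k.2)

/-- The matrix is `!![a, b; b, c] ⊗ₖ 1` with the indices of `Fin 2 × Fin n` flattened. -/
theorem det_blockScalar {R : Type*} [CommRing R] (n : ℕ) (a b c : R) :
    (Matrix.of fun i j : Fin (2 * n) =>
        (if (i : ℕ) < n then (if (j : ℕ) < n then a else b)
          else (if (j : ℕ) < n then b else c))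
          * (if (i : ℕ) % n = (j : ℕ) % n then (1 : R) else 0)).det
      = (a * c - b ^ 2) ^ n := by
  have hM : (Matrix.of fun i j : Fin (2 * n) =>
        (if (i : ℕ) < n then (if (j : ℕ) < n then a else b)
          else (if (j : ℕ) < n then b else c))
          * (if (i : ℕ) % n = (j : ℕ) % n then (1 : R) else 0))
      = (!![a, b; b, c] ⊗ₖ (1 : Matrix (Fin n) (Fin n) R)).submatrix
          finProdFinEquiv.symm finProdFinEquiv.symm := by
    ext i j
    simp only [of_apply, submatrix_apply, finProdFinEquiv_symm_apply, kroneckerMap_apply,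
      Fin.divNat_two_mul, one_apply, Fin.ext_iff, Fin.coe_modNat]
    split_ifs <;> simp_all
  rw [hM, det_submatrix_equiv_self, det_kronecker, det_fin_two_of, det_one, one_pow,
    mul_one, Fintype.card_fin, sq]

section Signs

variable {σ₁ σ₂ σ₁₂ : ℝ}

theorem blockDet_eq_of_sq_eq_one (h : σ₁₂ ^ 2 = 1) :
    (σ₁ + σ₁₂) * (σ₂ + σ₁₂) - σ₁₂ ^ 2 = σ₁₂ * (σ₁₂ * σ₁ * σ₂ + σ₁ + σ₂) := by
  linear_combination (-σ₁ * σ₂) * h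

/-- A sum of three signs is odd, hence nonzero. -/
theorem one_le_abs_mul_mul_add_add_of_signs (h₁ : σ₁ = 1 ∨ σ₁ = -1) (h₂ : σ₂ = 1 ∨ σ₂ = -1)
    (h₁₂ : σ₁₂ = 1 ∨ σ₁₂ = -1) :
    1 ≤ |σ₁₂ * σ₁ * σ₂ + σ₁ + σ₂| := by
  rcases h₁ with rfl | rfl <;> rcases h₂ with rfl | rfl <;> rcases h₁₂ with rfl | rfl <;>
    norm_num

end Signs

theorem fderiv_signed_sum_eq_zero {E : Type*} [NormedAddCommGroup E] [NormedSpace ℝ E]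
    {Ω : E → ℝ} (hΩ : HasFDerivAt Ω (0 : E →L[ℝ] ℝ) 0) (a b c : ℝ) :
    fderiv ℝ (fun q : E × E => a * Ω q.1 + b * Ω q.2 + c * Ω (q.1 + q.2)) (0, 0) = 0 := by
  have hΩ' : HasFDerivAt Ω (0 : E →L[ℝ] ℝ) ((0 : E) + 0) := by rwa [add_zero]
  have h₁ := (hΩ.comp ((0 : E), (0 : E)) (hasFDerivAt_fst (𝕜 := ℝ))).const_mul a
  have h₂ := (hΩ.comp ((0 : E), (0 : E)) (hasFDerivAt_snd (𝕜 := ℝ))).const_mul b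
  have h₃ := (hΩ'.comp ((0 : E), (0 : E))
    ((hasFDerivAt_fst (𝕜 := ℝ)).add hasFDerivAt_snd)).const_mul c
  refine ((h₁.add h₂).add h₃).fderiv.trans ?_
  simp

section L2

variable {E : Type*} [SeminormedAddCommGroup E]

theorem abs_sub_sqrt_norm_sq_add_le (u₁ u₂ v₁ v₂ : E) :
    |√(‖u₁‖ ^ 2 + ‖u₂‖ ^ 2) - √(‖v₁‖ ^ 2 + ‖v₂‖ ^ 2)|
      ≤ √(‖u₁ - v₁‖ ^ 2 + ‖u₂ - v₂‖ ^ 2) := by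
  simpa only [WithLp.prod_norm_eq_of_L2, ← WithLp.toLp_sub, WithLp.toLp_fst, WithLp.toLp_snd,
    Prod.mk_sub_mk] using
    abs_norm_sub_norm_le (WithLp.toLp 2 (u₁, u₂)) (WithLp.toLp 2 (v₁, v₂))

theorem sqrt_norm_sq_add_bounds_of_close {u₁ u₂ v₁ v₂ : E}
    (h₁ : ‖u₁ - v₁‖ ≤ √(‖v₁‖ ^ 2 + ‖v₂‖ ^ 2) / 4)
    (h₂ : ‖u₂ - v₂‖ ≤ √(‖v₁‖ ^ 2 + ‖v₂‖ ^ 2) / 4) :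
    √(‖v₁‖ ^ 2 + ‖v₂‖ ^ 2) / 2 ≤ √(‖u₁‖ ^ 2 + ‖u₂‖ ^ 2) ∧
      √(‖u₁‖ ^ 2 + ‖u₂‖ ^ 2) ≤ 3 * √(‖v₁‖ ^ 2 + ‖v₂‖ ^ 2) / 2 := by
  set S := √(‖v₁‖ ^ 2 + ‖v₂‖ ^ 2)
  have hS : 0 ≤ S := Real.sqrt_nonneg _
  have hdist : √(‖u₁ - v₁‖ ^ 2 + ‖u₂ - v₂‖ ^ 2) ≤ S / 2 := by
    refine (Real.sqrt_le_left (by positivity)).2 ?_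
    nlinarith [pow_le_pow_left₀ (norm_nonneg _) h₁ 2, pow_le_pow_left₀ (norm_nonneg _) h₂ 2]
  obtain ⟨hlow, hhigh⟩ := abs_le.mp ((abs_sub_sqrt_norm_sq_add_le u₁ u₂ v₁ v₂).trans hdist)
  constructor <;> linarith

end L2

section Perturbation

variable {E : Type*} [SeminormedAddCommGroup E] [NormedSpace ℝ E]

theorem norm_le_of_cramer (a b c : ℝ) (p₁ p₂ : E) :
    |a * c - b ^ 2| * ‖p₁‖ ≤ |c| * ‖a • p₁ + b • p₂‖ + |b| * ‖b • p₁ + c • p₂‖ := by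
  have h : (a * c - b ^ 2) • p₁ = c • (a • p₁ + b • p₂) - b • (b • p₁ + c • p₂) := by module
  calc |a * c - b ^ 2| * ‖p₁‖ = ‖c • (a • p₁ + b • p₂) - b • (b • p₁ + c • p₂)‖ := by
        rw [← h, norm_smul, Real.norm_eq_abs]
    _ ≤ _ := by
        refine (norm_sub_le _ _).trans ?_
        rw [norm_smul, norm_smul, Real.norm_eq_abs, Real.norm_eq_abs]

theorem norm_le_three_mul_of_signs {σ₁ σ₂ σ₁₂ : ℝ} (h₁ : σ₁ = 1 ∨ σ₁ = -1)
    (h₂ : σ₂ = 1 ∨ σ₂ = -1) (h₁₂ : σ₁₂ = 1 ∨ σ₁₂ = -1) (p₁ p₂ : E) :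
    ‖p₁‖ ≤ 3 * √(‖(σ₁ + σ₁₂) • p₁ + σ₁₂ • p₂‖ ^ 2 + ‖σ₁₂ • p₁ + (σ₂ + σ₁₂) • p₂‖ ^ 2) ∧
      ‖p₂‖ ≤ 3 * √(‖(σ₁ + σ₁₂) • p₁ + σ₁₂ • p₂‖ ^ 2 + ‖σ₁₂ • p₁ + (σ₂ + σ₁₂) • p₂‖ ^ 2) := by
  set T₁ := (σ₁ + σ₁₂) • p₁ + σ₁₂ • p₂
  set T₂ := σ₁₂ • p₁ + (σ₂ + σ₁₂) • p₂
  set S := √(‖T₁‖ ^ 2 + ‖T₂‖ ^ 2)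
  have habs : ∀ {σ : ℝ}, σ = 1 ∨ σ = -1 → |σ| = 1 := (abs_eq zero_le_one).2
  have hD : 1 ≤ |(σ₁ + σ₁₂) * (σ₂ + σ₁₂) - σ₁₂ ^ 2| := by
    rw [blockDet_eq_of_sq_eq_one (by rcases h₁₂ with rfl | rfl <;> norm_num), abs_mul,
      habs h₁₂, one_mul]
    exact one_le_abs_mul_mul_add_add_of_signs h₁ h₂ h₁₂
  have ha : |σ₁ + σ₁₂| ≤ 2 := (abs_add_le _ _).trans (by rw [habs h₁, habs h₁₂]; norm_num)
  have hc : |σ₂ + σ₁₂| ≤ 2 := (abs_add_le _ _).trans (by rw [habs h₂, habs h₁₂]; norm_num)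
  have hT₁ : ‖T₁‖ ≤ S := Real.le_sqrt_of_sq_le (le_add_of_nonneg_right (by positivity))
  have hT₂ : ‖T₂‖ ≤ S := Real.le_sqrt_of_sq_le (le_add_of_nonneg_left (by positivity))
  constructor
  · calc ‖p₁‖ ≤ |(σ₁ + σ₁₂) * (σ₂ + σ₁₂) - σ₁₂ ^ 2| * ‖p₁‖ :=
          le_mul_of_one_le_left (norm_nonneg _) hD
      _ ≤ |σ₂ + σ₁₂| * ‖T₁‖ + |σ₁₂| * ‖T₂‖ := norm_le_of_cramer _ _ _ p₁ p₂
      _ ≤ 2 * S + 1 * S := by rw [habs h₁₂]; gcongr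
      _ = 3 * S := by ring
  · have hcramer := norm_le_of_cramer (σ₂ + σ₁₂) σ₁₂ (σ₁ + σ₁₂) p₂ p₁
    rw [add_comm ((σ₂ + σ₁₂) • p₂), add_comm (σ₁₂ • p₂), mul_comm (σ₂ + σ₁₂)] at hcramer
    calc ‖p₂‖ ≤ |(σ₁ + σ₁₂) * (σ₂ + σ₁₂) - σ₁₂ ^ 2| * ‖p₂‖ :=
          le_mul_of_one_le_left (norm_nonneg _) hD
      _ ≤ |σ₁ + σ₁₂| * ‖T₂‖ + |σ₁₂| * ‖T₁‖ := hcramer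
      _ ≤ 2 * S + 1 * S := by rw [habs h₁₂]; gcongr
      _ = 3 * S := by ring

theorem norm_signed_perturbation_le {A : E → E →L[ℝ] E} {CA lam σ σ' : ℝ}
    (hA : ∀ q, ‖A q‖ ≤ CA) (hlam : 0 ≤ lam) (hσ : |σ| ≤ 1) (hσ' : |σ'| ≤ 1) (q q' x y : E) :
    ‖σ • (x + lam • A q x) + σ' • (y + lam • A q' y) - (σ • x + σ' • y)‖
      ≤ lam * CA * (‖x‖ + ‖y‖) := by
  have h : σ • (x + lam • A q x) + σ' • (y + lam • A q' y) - (σ • x + σ' • y)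
      = lam • (σ • A q x + σ' • A q' y) := by module
  have hsmul : ∀ {s : ℝ} (v : E), |s| ≤ 1 → ‖s • v‖ ≤ ‖v‖ := fun v hs => by
    rw [norm_smul, Real.norm_eq_abs]; exact mul_le_of_le_one_left (norm_nonneg v) hs
  rw [h, norm_smul, Real.norm_of_nonneg hlam, mul_assoc]
  gcongr
  calc ‖σ • A q x + σ' • A q' y‖ ≤ ‖A q x‖ + ‖A q' y‖ :=
        (norm_add_le _ _).trans (add_le_add (hsmul _ hσ) (hsmul _ hσ'))
    _ ≤ CA * ‖x‖ + CA * ‖y‖ :=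
        add_le_add ((A q).le_of_opNorm_le (hA q) x) ((A q').le_of_opNorm_le (hA q') y)
    _ = CA * (‖x‖ + ‖y‖) := by ring

theorem hessian_block_bounds {A : E → E →L[ℝ] E} {CA lam σ₁ σ₂ σ₁₂ : ℝ} (h₁ : σ₁ = 1 ∨ σ₁ = -1)
    (h₂ : σ₂ = 1 ∨ σ₂ = -1) (h₁₂ : σ₁₂ = 1 ∨ σ₁₂ = -1) (hA : ∀ q, ‖A q‖ ≤ CA)
    (hlam : 0 ≤ lam) (hsmall : lam * CA ≤ 1 / 36) (k₁ k₂ p₁ p₂ : E) :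
    let H : E → E → E := fun q x => x + lam • A q x
    let r₁ := σ₁ • H k₁ p₁ + σ₁₂ • H (k₁ + k₂) (p₁ + p₂)
    let r₂ := σ₂ • H k₂ p₂ + σ₁₂ • H (k₁ + k₂) (p₁ + p₂)
    let T₁ := (σ₁ + σ₁₂) • p₁ + σ₁₂ • p₂
    let T₂ := σ₁₂ • p₁ + (σ₂ + σ₁₂) • p₂
    √(‖T₁‖ ^ 2 + ‖T₂‖ ^ 2) / 2 ≤ √(‖r₁‖ ^ 2 + ‖r₂‖ ^ 2) ∧
      √(‖r₁‖ ^ 2 + ‖r₂‖ ^ 2) ≤ 3 * √(‖T₁‖ ^ 2 + ‖T₂‖ ^ 2) / 2 := by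
  intro H r₁ r₂ T₁ T₂
  set S := √(‖T₁‖ ^ 2 + ‖T₂‖ ^ 2)
  have habs : ∀ {σ : ℝ}, σ = 1 ∨ σ = -1 → |σ| ≤ 1 := fun h => ((abs_eq zero_le_one).2 h).le
  obtain ⟨hp₁, hp₂⟩ : ‖p₁‖ ≤ 3 * S ∧ ‖p₂‖ ≤ 3 * S := norm_le_three_mul_of_signs h₁ h₂ h₁₂ p₁ p₂
  have hp₁₂ : ‖p₁ + p₂‖ ≤ 6 * S := (norm_add_le _ _).trans (by linarith)
  have hclose : ∀ x y : E, ‖x‖ + ‖y‖ ≤ 9 * S → lam * CA * (‖x‖ + ‖y‖) ≤ S / 4 :=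
    fun _ _ hxy => calc
      lam * CA * (_ + _) ≤ 1 / 36 * (9 * S) :=
        mul_le_mul hsmall hxy (by positivity) (by norm_num)
      _ = S / 4 := by ring
  have hr₁ : ‖r₁ - T₁‖ ≤ S / 4 := by
    rw [show T₁ = σ₁ • p₁ + σ₁₂ • (p₁ + p₂) by module]
    exact (norm_signed_perturbation_le hA hlam (habs h₁) (habs h₁₂)
      k₁ (k₁ + k₂) p₁ (p₁ + p₂)).trans (hclose p₁ (p₁ + p₂) (by linarith))
  have hr₂ : ‖r₂ - T₂‖ ≤ S / 4 := by
    rw [show T₂ = σ₂ • p₂ + σ₁₂ • (p₁ + p₂) by module]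
    exact (norm_signed_perturbation_le hA hlam (habs h₂) (habs h₁₂)
      k₂ (k₁ + k₂) p₂ (p₁ + p₂)).trans (hclose p₂ (p₁ + p₂) (by linarith))
  exact sqrt_norm_sq_add_bounds_of_close hr₁ hr₂

end Perturbation

/-- For `F₂(p₁,p₂) = σ₁Ω(p₁) + σ₂Ω(p₂) + σ₁₂Ω(p₁+p₂)` with
`σ's ∈ {±1}` and `Ω` the Bogoliubov dispersion with `∇Ω(p) = (1+λε(p))p`,
`D²Ω = I + λA`, `‖ε‖_∞, ‖A‖_∞ ≤ C_A` (the constant `C·M²` of the previous lemma):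
(i) `∇F₂(0,0) = 0`; (ii) the block matrix `T` has determinant
`σ₁₂(σ₁₂σ₁σ₂+σ₁+σ₂)³ ≠ 0`; (iii) for λ small enough (depending on the bound `C_A`),
`|D²F₂(k₂)p₂| ∈ [|Tp₂|/2, 3|Tp₂|/2]` for all `k₂, p₂ ∈ ℝ⁶`, where the Hessian of `F₂`
acts blockwise through `H(q) = I + λA(q)`. -/
theorem stmt_11 :
    ∀ CA : ℝ, 0 < CA → ∃ lam₀ : ℝ, 0 < lam₀ ∧
      ∀ lam : ℝ, 0 < lam → lam < lam₀ →
        ∀ (Ω ε : EuclideanSpace ℝ (Fin 3) → ℝ)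
          (A : EuclideanSpace ℝ (Fin 3) →
            (EuclideanSpace ℝ (Fin 3) →L[ℝ] EuclideanSpace ℝ (Fin 3)))
          (σ₁ σ₂ σ₁₂ : ℝ),
          (σ₁ = 1 ∨ σ₁ = -1) → (σ₂ = 1 ∨ σ₂ = -1) → (σ₁₂ = 1 ∨ σ₁₂ = -1) →
          Differentiable ℝ Ω →
          (∀ p, gradient Ω p = (1 + lam * ε p) • p) →
          (∀ p, |ε p| ≤ CA) →
          (∀ p, fderiv ℝ (gradient Ω) p
              = ContinuousLinearMap.id ℝ (EuclideanSpace ℝ (Fin 3)) + lam • A p) →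
          (∀ p, ‖A p‖ ≤ CA) →
          -- (i)  ∇F₂(0,0) = 0
          (fderiv ℝ
              (fun q : EuclideanSpace ℝ (Fin 3) × EuclideanSpace ℝ (Fin 3) =>
                σ₁ * Ω q.1 + σ₂ * Ω q.2 + σ₁₂ * Ω (q.1 + q.2)) (0, 0) = 0) ∧
          -- (ii)  det T = σ₁₂(σ₁₂σ₁σ₂+σ₁+σ₂)³ ≠ 0
          ((Matrix.of fun i j : Fin 6 =>
              (if (i : ℕ) < 3 then (if (j : ℕ) < 3 then σ₁ + σ₁₂ else σ₁₂)
                else (if (j : ℕ) < 3 then σ₁₂ else σ₂ + σ₁₂))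
                * (if (i : ℕ) % 3 = (j : ℕ) % 3 then (1 : ℝ) else 0)).det
              = σ₁₂ * (σ₁₂ * σ₁ * σ₂ + σ₁ + σ₂) ^ 3 ∧
            σ₁₂ * (σ₁₂ * σ₁ * σ₂ + σ₁ + σ₂) ^ 3 ≠ 0) ∧
          -- (iii)  |D²F₂(k₂)p₂| ∈ [|Tp₂|/2, 3|Tp₂|/2]
          (∀ k₁ k₂ p₁ p₂ : EuclideanSpace ℝ (Fin 3),
            let Hq : EuclideanSpace ℝ (Fin 3) → EuclideanSpace ℝ (Fin 3) →
                EuclideanSpace ℝ (Fin 3) := fun q x => x + lam • A q x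
            let row1 := σ₁ • Hq k₁ p₁ + σ₁₂ • Hq (k₁ + k₂) (p₁ + p₂)
            let row2 := σ₂ • Hq k₂ p₂ + σ₁₂ • Hq (k₁ + k₂) (p₁ + p₂)
            let T1 := (σ₁ + σ₁₂) • p₁ + σ₁₂ • p₂
            let T2 := σ₁₂ • p₁ + (σ₂ + σ₁₂) • p₂
            Real.sqrt (‖T1‖ ^ 2 + ‖T2‖ ^ 2) / 2
                ≤ Real.sqrt (‖row1‖ ^ 2 + ‖row2‖ ^ 2) ∧
              Real.sqrt (‖row1‖ ^ 2 + ‖row2‖ ^ 2)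
                ≤ 3 * Real.sqrt (‖T1‖ ^ 2 + ‖T2‖ ^ 2) / 2) := by
  intro CA hCA
  refine ⟨1 / (36 * CA), by positivity, ?_⟩
  intro lam hlam hlam₀ Ω ε A σ₁ σ₂ σ₁₂ h₁ h₂ h₁₂ hΩ hgrad _ _ hA
  have hsmall : lam * CA ≤ 1 / 36 := by
    rw [lt_div_iff₀ (by positivity)] at hlam₀
    linarith
  have hΩ₀ : HasFDerivAt Ω (0 : EuclideanSpace ℝ (Fin 3) →L[ℝ] ℝ) 0 := by
    have hcrit : fderiv ℝ Ω 0 = 0 := by rw [← toDual_gradient, hgrad, smul_zero, map_zero]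
    exact hcrit ▸ (hΩ 0).hasFDerivAt
  have hsq : σ₁₂ ^ 2 = 1 := by rcases h₁₂ with rfl | rfl <;> norm_num
  refine ⟨fderiv_signed_sum_eq_zero hΩ₀ σ₁ σ₂ σ₁₂, ⟨?_, ?_⟩,
    hessian_block_bounds h₁ h₂ h₁₂ hA hlam.le hsmall⟩
  · refine (det_blockScalar 3 _ _ _).trans ?_
    rw [blockDet_eq_of_sq_eq_one hsq, mul_pow, pow_succ, hsq, one_mul]
  · have hX := one_le_abs_mul_mul_add_add_of_signs h₁ h₂ h₁₂
    exact mul_ne_zero (by rintro rfl; norm_num at hsq)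
      (pow_ne_zero 3 (abs_pos.mp (zero_lt_one.trans_le hX)))
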